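/- arXiv:2402.16260 — 2 statements merged into one kernel-verified Lean document; each statement's English description precedes it below -/
import Mathlib

section
/- Let n ≥ 1 and let A ∈ ℝ^{n×n} be a nonnegative matrix with zero diagonal whose directed graph is strongly connected, let L = D − A be its Laplacian with D = diag(Σ_j A_{1j},…,Σ_j A_{nj}), and let b ∈ ℝⁿ be a nonnegative vector with b_i > 0 for at least one index i, B = diag(b). Then the matrix L + B is nonsingular (invertible). -/
open Matrix

/-! A maximum principle. Suppose `(L + B) x ≤ 0` and `x` attains a positive maximum at `m`.
The `m`-th row `∑ⱼ Aₘⱼ (xₘ - xⱼ) + bₘ xₘ` is then a sum of nonnegative terms, so all of them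
vanish: `bₘ = 0`, and every out-neighbour of `m` is again a maximiser. By strong connectivity
every node is a maximiser, contradicting `bₖ > 0`. Hence `(L + B) x ≤ 0` forces `x ≤ 0`;
applied to `x` and `-x` for `x` in the kernel, this makes `L + B` injective. -/

section MaximumPrinciple

variable {ι : Type*} [Fintype ι] {A : Matrix ι ι ℝ} {b x : ι → ℝ}

theorem laplacian_mulVec_apply [DecidableEq ι] (A : Matrix ι ι ℝ) (x : ι → ℝ) (i : ι) :
    ((diagonal (fun i => ∑ j, A i j) - A) *ᵥ x) i = ∑ j, A i j * (x i - x j) := by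
  rw [sub_mulVec, Pi.sub_apply, mulVec_diagonal]
  simp only [mulVec, dotProduct, mul_sub, Finset.sum_sub_distrib, Finset.sum_mul]

theorem eq_zero_and_forall_adj_eq_of_isMax (hA : ∀ i j, 0 ≤ A i j) (hb : ∀ i, 0 ≤ b i)
    {i : ι} (hrow : ∑ j, A i j * (x i - x j) + b i * x i ≤ 0)
    (hmax : ∀ j, x j ≤ x i) (hpos : 0 < x i) :
    b i = 0 ∧ ∀ j, 0 < A i j → x j = x i := by
  have hterm : ∀ j ∈ Finset.univ, 0 ≤ A i j * (x i - x j) := fun j _ =>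
    mul_nonneg (hA i j) (sub_nonneg.2 (hmax j))
  have hsum := Finset.sum_nonneg hterm
  have hbx : 0 ≤ b i * x i := mul_nonneg (hb i) hpos.le
  refine ⟨?_, fun j hj => ?_⟩
  · have : b i * x i = 0 := by linarith
    exact (mul_eq_zero.1 this).resolve_right hpos.ne'
  · have hzero := (Finset.sum_eq_zero_iff_of_nonneg hterm).1 (by linarith) j (Finset.mem_univ j)
    linarith [(mul_eq_zero.1 hzero).resolve_left hj.ne']

theorem nonpos_of_laplacian_add_diagonal_mulVec_nonpos [DecidableEq ι]
    (hA : ∀ i j, 0 ≤ A i j)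
    (hconn : ∀ i j : ι, i ≠ j → Relation.TransGen (fun a c => 0 < A a c) i j)
    (hb : ∀ i, 0 ≤ b i) (hbpos : ∃ i, 0 < b i)
    (hx : ∀ i, ((diagonal (fun i => ∑ j, A i j) - A + diagonal b) *ᵥ x) i ≤ 0) (i : ι) :
    x i ≤ 0 := by
  obtain ⟨k, hbk⟩ := hbpos
  have : Nonempty ι := ⟨k⟩
  obtain ⟨m, hm⟩ := Finite.exists_max x
  by_contra! hxi_pos
  have hpos : 0 < x m := hxi_pos.trans_le (hm i)
  have hrow : ∀ i, ∑ j, A i j * (x i - x j) + b i * x i ≤ 0 := fun i => by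
    simpa only [add_mulVec, Pi.add_apply, laplacian_mulVec_apply, mulVec_diagonal] using hx i
  have hmaxAt : ∀ i, x i = x m → b i = 0 ∧ ∀ j, 0 < A i j → x j = x m := fun i hi => by
    rw [← hi] at hpos hm ⊢
    exact eq_zero_and_forall_adj_eq_of_isMax hA hb (hrow i) hm hpos
  have hreach : ∀ j, Relation.TransGen (fun a c => 0 < A a c) m j → x j = x m := fun j h => by
    induction h with
    | single h => exact (hmaxAt m rfl).2 _ h
    | tail _ h ih => exact (hmaxAt _ ih).2 _ h
  rcases eq_or_ne m k with rfl | hmk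
  · exact hbk.ne' (hmaxAt m rfl).1
  · exact hbk.ne' (hmaxAt k (hreach k (hconn m k hmk))).1

end MaximumPrinciple

theorem L_plus_B_invertible_general
    (n : ℕ)
    (A : Matrix (Fin n) (Fin n) ℝ)
    (hA : ∀ i j, 0 ≤ A i j)
    (hconn : ∀ i j : Fin n, i ≠ j → Relation.TransGen (fun a c => 0 < A a c) i j)
    (L : Matrix (Fin n) (Fin n) ℝ)
    (hL : L = Matrix.diagonal (fun i => ∑ j, A i j) - A)
    (b : Fin n → ℝ) (hb : ∀ i, 0 ≤ b i) (hbpos : ∃ i, 0 < b i)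
    (B : Matrix (Fin n) (Fin n) ℝ) (hB : B = Matrix.diagonal b) :
    IsUnit (L + B) := by
  subst hL hB
  refine mulVec_injective_iff_isUnit.1 fun x y hxy => funext fun i => ?_
  have hker : (diagonal (fun i => ∑ j, A i j) - A + diagonal b) *ᵥ (x - y) = 0 := by
    rw [mulVec_sub, hxy, sub_self]
  have hker_neg : (diagonal (fun i => ∑ j, A i j) - A + diagonal b) *ᵥ (-(x - y)) = 0 := by
    rw [mulVec_neg, hker, neg_zero]
  have h₁ := nonpos_of_laplacian_add_diagonal_mulVec_nonpos hA hconn hb hbpos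
    (fun j => (congrFun hker j).le) i
  have h₂ := nonpos_of_laplacian_add_diagonal_mulVec_nonpos hA hconn hb hbpos
    (fun j => (congrFun hker_neg j).le) i
  simp only [Pi.sub_apply, Pi.neg_apply] at h₁ h₂
  linarith

/-- for a strongly connected weighted digraph with Laplacian `L`
and a nonnegative pinning vector `b` with at least one positive entry,
the matrix `L + B` (with `B = diag(b)`) is nonsingular. -/
theorem L_plus_B_invertible
    (n : ℕ) (hn : 0 < n)
    (A : Matrix (Fin n) (Fin n) ℝ)
    (hA : ∀ i j, 0 ≤ A i j) (hAdiag : ∀ i, A i i = 0)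
    (hconn : ∀ i j : Fin n, i ≠ j → Relation.TransGen (fun a c => 0 < A a c) i j)
    (L : Matrix (Fin n) (Fin n) ℝ)
    (hL : L = Matrix.diagonal (fun i => ∑ j, A i j) - A)
    (b : Fin n → ℝ) (hb : ∀ i, 0 ≤ b i) (hbpos : ∃ i, 0 < b i)
    (B : Matrix (Fin n) (Fin n) ℝ) (hB : B = Matrix.diagonal b) :
    IsUnit (L + B) :=
  L_plus_B_invertible_general n A hA hconn L hL b hb hbpos B hB
end

section
/- For all v, y ∈ ℝ, |y − ⌊v⌉²| · |v − ⌊y⌉^{1/2}| ≤ 2·|v|³ + 3·|v − ⌊y⌉^{1/2}|³, i.e., |y − sign(v)·v²| · |v − sign(y)·√|y|| ≤ 2|v|³ + 3|v − sign(y)·√|y||³. -/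
/-! Put `w = ⌊y⌉^{1/2}`, so that `y = ⌊w⌉²`. Since `⌊x⌉² = x|x|`, one has
`|⌊a⌉² - ⌊b⌉²| ≤ (|a| + |b|)|a - b|`, and with `t = |v - w|` and `|w| ≤ |v| + t` the left-hand
side is at most `(2|v| + t) t²`. Young's inequality in the crude form `|v| t² ≤ |v|³ + t³`
finishes. -/

noncomputable def spow (x a : ℝ) : ℝ := Real.sign x * |x| ^ a

lemma spow_two (x : ℝ) : spow x 2 = x * |x| := by
  rw [spow, Real.rpow_two, sq_abs]
  rcases lt_trichotomy x 0 with hx | rfl | hx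
  · rw [Real.sign_of_neg hx, abs_of_neg hx]; ring
  · simp
  · rw [Real.sign_of_pos hx, abs_of_pos hx]; ring

lemma spow_half (y : ℝ) : spow y (1 / 2) = Real.sign y * √|y| := by
  rw [spow, Real.sqrt_eq_rpow]

lemma spow_two_spow_half (y : ℝ) : spow (spow y (1 / 2)) 2 = y := by
  rw [spow_two, spow_half, abs_mul, abs_of_nonneg (Real.sqrt_nonneg _)]
  rcases lt_trichotomy y 0 with hy | rfl | hy
  · rw [Real.sign_of_neg hy, abs_of_neg hy]
    linear_combination -Real.mul_self_sqrt (neg_nonneg.2 hy.le)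
  · simp
  · rw [Real.sign_of_pos hy, abs_of_pos hy]
    linear_combination Real.mul_self_sqrt hy.le

lemma abs_spow_two_sub_spow_two_le (a b : ℝ) :
    |spow a 2 - spow b 2| ≤ (|a| + |b|) * |a - b| := by
  rw [spow_two, spow_two]
  rcases le_total 0 a with ha | ha <;> rcases le_total 0 b with hb | hb <;>
    simp only [abs_of_nonneg, abs_of_nonpos, ha, hb] <;>
    rw [abs_le] <;> constructor <;> nlinarith [le_abs_self (a - b), neg_abs_le (a - b)]

lemma mul_sq_le_pow_three_add_pow_three {s t : ℝ} (hs : 0 ≤ s) (ht : 0 ≤ t) :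
    s * t ^ 2 ≤ s ^ 3 + t ^ 3 := by
  rcases le_total s t with h | h
  · have : s * t ^ 2 ≤ t ^ 3 := by
      rw [pow_succ' t 2]; exact mul_le_mul_of_nonneg_right h (sq_nonneg t)
    linarith [pow_nonneg hs 3]
  · have : s * t ^ 2 ≤ s ^ 3 := by
      rw [pow_succ' s 2]; exact mul_le_mul_of_nonneg_left (pow_le_pow_left₀ ht h 2) hs
    linarith [pow_nonneg ht 3]

/-- inequality (24):
`|y − ⌊v⌉²|·|v − ⌊y⌉^{1/2}| ≤ 2|v|³ + 3|v − ⌊y⌉^{1/2}|³`. -/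
theorem ineq_24 (v y : ℝ) :
    |y - spow v 2| * |v - spow y (1/2)| ≤ 2 * |v| ^ 3 + 3 * |v - spow y (1/2)| ^ 3 := by
  have hlip := abs_spow_two_sub_spow_two_le (spow y (1 / 2)) v
  rw [spow_two_spow_half, abs_sub_comm _ v] at hlip
  set w := spow y (1 / 2)
  set t := |v - w|
  have hw : |w| ≤ |v| + t := by simpa [t, abs_sub_comm] using abs_add_le v (w - v)
  calc |y - spow v 2| * t ≤ (|w| + |v|) * t * t := by gcongr
    _ ≤ (2 * |v| + t) * t ^ 2 := by
        rw [mul_assoc, ← sq]; exact mul_le_mul_of_nonneg_right (by linarith) (sq_nonneg t)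
    _ = 2 * (|v| * t ^ 2) + t ^ 3 := by ring
    _ ≤ 2 * |v| ^ 3 + 3 * t ^ 3 := by
        linarith [mul_sq_le_pow_three_add_pow_three (abs_nonneg v) (abs_nonneg (v - w))]
end
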